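/- arXiv:2106.03155 — 4 statements merged into one kernel-verified Lean document; each statement's English description precedes it below -/
import Mathlib

section
/- Existence part of Proposition 1: Let d : S × A → ℝ be nonnegative and feasible, i.e. for all s ∈ S: Σ_a d(s,a) = (1−γ) p0(s) + γ Σ_{s',a'} p(s | s',a') d(s',a'). Assume p0(s) > 0 for every s ∈ S (so that Σ_a d(s,a) ≥ (1−γ)p0(s) > 0). Define the policy π by π(a|s) = d(s,a) / Σ_{a'} d(s,a'). Then d is exactly the discounted occupancy distribution of π, i.e. d(s,a) = d_π(s,a) for all (s,a). -/
open Finset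

/-- `occ p p0 π t s a` is the time-`t` state-action distribution `d_t^π(s,a)`. -/
noncomputable def occ {S A : Type*} [Fintype S] [Fintype A]
    (p : S → A → S → ℝ) (p0 : S → ℝ) (π : S → A → ℝ) : ℕ → S → A → ℝ
  | 0 => fun s a => p0 s * π s a
  | (t + 1) => fun s' a' => π s' a' * ∑ s, ∑ a, p s a s' * occ p p0 π t s a

/-- The discounted occupancy distribution `d_π(s,a) = (1-γ) ∑_t γ^t d_t^π(s,a)`. -/
noncomputable def dOcc {S A : Type*} [Fintype S] [Fintype A]
    (γ : ℝ) (p : S → A → S → ℝ) (p0 : S → ℝ) (π : S → A → ℝ) (s : S) (a : A) : ℝ :=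
  (1 - γ) * ∑' t : ℕ, γ ^ t * occ p p0 π t s a

/-- The state marginal at time `t`. -/
noncomputable def fmarg {S A : Type*} [Fintype S] [Fintype A]
    (p : S → A → S → ℝ) (p0 : S → ℝ) (π : S → A → ℝ) : ℕ → S → ℝ
  | 0 => p0
  | (t + 1) => fun s' => ∑ s, ∑ a, p s a s' * (fmarg p p0 π t s * π s a)

lemma fmarg_zero {S A : Type*} [Fintype S] [Fintype A]
    (p : S → A → S → ℝ) (p0 : S → ℝ) (π : S → A → ℝ) (s : S) :
    fmarg p p0 π 0 s = p0 s := rfl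

lemma fmarg_succ {S A : Type*} [Fintype S] [Fintype A]
    (p : S → A → S → ℝ) (p0 : S → ℝ) (π : S → A → ℝ) (t : ℕ) (s' : S) :
    fmarg p p0 π (t + 1) s' = ∑ s, ∑ a, p s a s' * (fmarg p p0 π t s * π s a) := rfl

lemma occ_eq_fmarg {S A : Type*} [Fintype S] [Fintype A]
    (p : S → A → S → ℝ) (p0 : S → ℝ) (π : S → A → ℝ) (t : ℕ) (s : S) (a : A) :
    occ p p0 π t s a = fmarg p p0 π t s * π s a := by
  induction t generalizing s a with
  | zero => simp [occ, fmarg]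
  | succ t ih =>
    simp only [occ, fmarg, ih]
    ring

theorem prop1_existence {S A : Type*} [Fintype S] [Fintype A] [Nonempty S] [Nonempty A]
    (p : S → A → S → ℝ) (hp_nonneg : ∀ s a s', 0 ≤ p s a s')
    (hp_sum : ∀ s a, ∑ s', p s a s' = 1)
    (p0 : S → ℝ) (hp0_pos : ∀ s, 0 < p0 s) (hp0_sum : ∑ s, p0 s = 1)
    (γ : ℝ) (hγ0 : 0 ≤ γ) (hγ1 : γ < 1)
    (d : S → A → ℝ) (hd_nonneg : ∀ s a, 0 ≤ d s a)
    (hd_feasible : ∀ s, ∑ a, d s a =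
      (1 - γ) * p0 s + γ * ∑ s', ∑ a', p s' a' s * d s' a')
    (π : S → A → ℝ) (hπ : ∀ s a, π s a = d s a / ∑ a', d s a') :
    ∀ s a, d s a = dOcc γ p p0 π s a := by
  set D : S → ℝ := fun s => ∑ a, d s a with hD
  have hγ1' : 0 < 1 - γ := by linarith
  have hDpos : ∀ s, 0 < D s := by
    intro s
    have h2 : 0 ≤ ∑ s', ∑ a', p s' a' s * d s' a' :=
      Finset.sum_nonneg fun s' _ => Finset.sum_nonneg fun a' _ =>
        mul_nonneg (hp_nonneg _ _ _) (hd_nonneg _ _)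
    have h3 : D s = (1 - γ) * p0 s + γ * ∑ s', ∑ a', p s' a' s * d s' a' := hd_feasible s
    nlinarith [hp0_pos s, mul_nonneg hγ0 h2]
  have hπ_nonneg : ∀ s a, 0 ≤ π s a := fun s a => by
    rw [hπ]; exact div_nonneg (hd_nonneg s a) (hDpos s).le
  have hπ_sum : ∀ s, ∑ a, π s a = 1 := by
    intro s
    have h1 : ∑ a, π s a = (∑ a, d s a) / D s := by
      rw [Finset.sum_div]; exact Finset.sum_congr rfl fun a _ => hπ s a
    rw [h1]; exact div_self (hDpos s).ne'
  have hdeq : ∀ s a, d s a = D s * π s a := by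
    intro s a
    rw [hπ s a]
    rw [show (∑ a', d s a') = D s from rfl, mul_div_cancel₀ _ (hDpos s).ne']
  set f : ℕ → S → ℝ := fmarg p p0 π with hf
  have hf_nonneg : ∀ t s, 0 ≤ f t s := by
    intro t
    induction t with
    | zero => intro s; exact (hp0_pos s).le
    | succ t ih =>
      intro s'
      exact Finset.sum_nonneg fun s _ => Finset.sum_nonneg fun a _ =>
        mul_nonneg (hp_nonneg _ _ _) (mul_nonneg (ih s) (hπ_nonneg s a))
  have hf_sum : ∀ t, ∑ s, f t s = 1 := by
    intro t
    induction t with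
    | zero => exact hp0_sum
    | succ t ih =>
      rw [hf] at *
      simp only [fmarg_succ]
      rw [Finset.sum_comm]
      calc ∑ s, ∑ s', ∑ a, p s a s' * (f t s * π s a)
          = ∑ s, ∑ a, ∑ s', p s a s' * (f t s * π s a) :=
            Finset.sum_congr rfl fun s _ => Finset.sum_comm
        _ = ∑ s, ∑ a, f t s * π s a := by
            refine Finset.sum_congr rfl fun s _ => Finset.sum_congr rfl fun a _ => ?_
            rw [← Finset.sum_mul, hp_sum, one_mul]
        _ = ∑ s, f t s := by
            refine Finset.sum_congr rfl fun s _ => ?_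
            rw [← Finset.mul_sum, hπ_sum, mul_one]
        _ = 1 := ih
  have hf_le : ∀ t s, f t s ≤ 1 := by
    intro t s
    calc f t s ≤ ∑ s', f t s' :=
          Finset.single_le_sum (fun s' _ => hf_nonneg t s') (Finset.mem_univ s)
      _ = 1 := hf_sum t
  have hsummable : ∀ s, Summable (fun t : ℕ => γ ^ t * f t s) := by
    intro s
    refine Summable.of_nonneg_of_le
      (fun t => mul_nonneg (pow_nonneg hγ0 t) (hf_nonneg t s))
      (fun t => ?_) (summable_geometric_of_lt_one hγ0 hγ1)
    calc γ ^ t * f t s ≤ γ ^ t * 1 :=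
          mul_le_mul_of_nonneg_left (hf_le t s) (pow_nonneg hγ0 t)
      _ = γ ^ t := mul_one _
  set g : S → ℝ := fun s => ∑' t : ℕ, γ ^ t * f t s with hg
  have hg_fix : ∀ s, g s = p0 s + γ * ∑ s', ∑ a', p s' a' s * (π s' a' * g s') := by
    intro s
    have h0 : g s = γ ^ 0 * f 0 s + ∑' t : ℕ, γ ^ (t + 1) * f (t + 1) s :=
      Summable.tsum_eq_zero_add (hsummable s)
    have hterm : ∀ t : ℕ, γ ^ (t + 1) * f (t + 1) s =
        ∑ s', ∑ a', γ * (p s' a' s * (π s' a' * (γ ^ t * f t s'))) := by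
      intro t
      rw [hf, fmarg_succ, ← hf]
      rw [Finset.mul_sum]
      refine Finset.sum_congr rfl fun s' _ => ?_
      rw [Finset.mul_sum]
      exact Finset.sum_congr rfl fun a' _ => by ring
    have hsum2 : ∀ s' a',
        Summable (fun t : ℕ => γ * (p s' a' s * (π s' a' * (γ ^ t * f t s')))) :=
      fun s' a' => (((hsummable s').mul_left (π s' a')).mul_left (p s' a' s)).mul_left γ
    have h1 : ∑' t : ℕ, γ ^ (t + 1) * f (t + 1) s =
        ∑ s', ∑ a', γ * (p s' a' s * (π s' a' * g s')) := by
      calc ∑' t : ℕ, γ ^ (t + 1) * f (t + 1) s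
          = ∑' t : ℕ, ∑ s', ∑ a', γ * (p s' a' s * (π s' a' * (γ ^ t * f t s'))) :=
            tsum_congr hterm
        _ = ∑ s', ∑' t : ℕ, ∑ a', γ * (p s' a' s * (π s' a' * (γ ^ t * f t s'))) :=
            Summable.tsum_finsetSum (fun s' _ => summable_sum (fun a' _ => hsum2 s' a'))
        _ = ∑ s', ∑ a', ∑' t : ℕ, γ * (p s' a' s * (π s' a' * (γ ^ t * f t s'))) :=
            Finset.sum_congr rfl fun s' _ => Summable.tsum_finsetSum (fun a' _ => hsum2 s' a')
        _ = ∑ s', ∑ a', γ * (p s' a' s * (π s' a' * g s')) := by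
            refine Finset.sum_congr rfl fun s' _ => Finset.sum_congr rfl fun a' _ => ?_
            rw [tsum_mul_left, tsum_mul_left, tsum_mul_left]
    rw [h0, h1]
    simp only [pow_zero, one_mul]
    have hf0 : f 0 s = p0 s := by rw [hf, fmarg_zero]
    rw [hf0, Finset.mul_sum]
    congr 1
    exact Finset.sum_congr rfl fun s' _ => by rw [Finset.mul_sum]
  have hD_fix : ∀ s, D s = (1 - γ) * p0 s + γ * ∑ s', ∑ a', p s' a' s * (π s' a' * D s') := by
    intro s
    rw [show D s = ∑ a, d s a from rfl, hd_feasible s]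
    congr 2
    refine Finset.sum_congr rfl fun s' _ => Finset.sum_congr rfl fun a' _ => ?_
    rw [hdeq s' a']; ring
  set e : S → ℝ := fun s => D s - (1 - γ) * g s with he
  have he_fix : ∀ s, e s = γ * ∑ s', ∑ a', p s' a' s * (π s' a' * e s') := by
    intro s
    have hsplit : ∑ s', ∑ a', p s' a' s * (π s' a' * e s')
        = (∑ s', ∑ a', p s' a' s * (π s' a' * D s'))
          - (1 - γ) * (∑ s', ∑ a', p s' a' s * (π s' a' * g s')) := by
      rw [Finset.mul_sum, ← Finset.sum_sub_distrib]
      refine Finset.sum_congr rfl fun s' _ => ?_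
      rw [Finset.mul_sum, ← Finset.sum_sub_distrib]
      refine Finset.sum_congr rfl fun a' _ => ?_
      simp only [he]
      ring
    simp only [he]
    rw [hsplit, hD_fix s, hg_fix s]
    ring
  have hN : ∑ s, |e s| ≤ γ * ∑ s, |e s| := by
    calc ∑ s, |e s| = ∑ s, |γ * ∑ s', ∑ a', p s' a' s * (π s' a' * e s')| :=
          Finset.sum_congr rfl fun s _ => by rw [he_fix s]
      _ ≤ ∑ s, γ * ∑ s', ∑ a', p s' a' s * (π s' a' * |e s'|) := by
          refine Finset.sum_le_sum fun s _ => ?_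
          rw [abs_mul, abs_of_nonneg hγ0]
          refine mul_le_mul_of_nonneg_left ?_ hγ0
          refine (Finset.abs_sum_le_sum_abs _ _).trans ?_
          refine Finset.sum_le_sum fun s' _ => ?_
          refine (Finset.abs_sum_le_sum_abs _ _).trans ?_
          refine Finset.sum_le_sum fun a' _ => ?_
          rw [abs_mul, abs_mul, abs_of_nonneg (hp_nonneg _ _ _),
            abs_of_nonneg (hπ_nonneg _ _)]
      _ = γ * ∑ s', ∑ a', π s' a' * |e s'| := by
          rw [← Finset.mul_sum, Finset.sum_comm]
          congr 1
          refine Finset.sum_congr rfl fun s' _ => ?_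
          rw [Finset.sum_comm]
          refine Finset.sum_congr rfl fun a' _ => ?_
          rw [← Finset.sum_mul, hp_sum, one_mul]
      _ ≤ γ * ∑ s', |e s'| := by
          refine mul_le_mul_of_nonneg_left ?_ hγ0
          refine Finset.sum_le_sum fun s' _ => ?_
          refine le_of_eq ?_
          rw [← Finset.sum_mul, hπ_sum, one_mul]
  have hNzero : ∑ s, |e s| = 0 := by
    have hnn : 0 ≤ ∑ s, |e s| :=
      Finset.sum_nonneg fun s _ => abs_nonneg (e s)
    nlinarith
  have he_zero : ∀ s, e s = 0 := by
    intro s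
    have h1 : |e s| ≤ ∑ s', |e s'| :=
      Finset.single_le_sum (fun s' _ => abs_nonneg (e s')) (Finset.mem_univ s)
    exact abs_eq_zero.mp (le_antisymm (hNzero ▸ h1) (abs_nonneg _))
  have hDg : ∀ s, D s = (1 - γ) * g s := by
    intro s
    have h := he_zero s
    simp only [he] at h
    linarith
  intro s a
  rw [hdeq s a, hDg s, dOcc]
  have hsum : (∑' t : ℕ, γ ^ t * occ p p0 π t s a) = g s * π s a := by
    rw [hg, ← tsum_mul_right]
    exact tsum_congr fun t => by rw [occ_eq_fmarg]; ring
  rw [hsum]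
  ring
end

section
/- Uniqueness part of Proposition 1: Assume p0(s) > 0 for every s ∈ S. If π and π' are two policies whose discounted occupancy distributions coincide, d_π(s,a) = d_{π'}(s,a) for all (s,a) ∈ S × A, then the policies themselves coincide: π(a|s) = π'(a|s) for all s ∈ S and a ∈ A. -/
open Finset

/-- The state marginal `ρ_t^π(s)`. -/
noncomputable def gOcc {S A : Type*} [Fintype S] [Fintype A]
    (p : S → A → S → ℝ) (p0 : S → ℝ) (π : S → A → ℝ) : ℕ → S → ℝ
  | 0 => p0
  | (t + 1) => fun s' => ∑ s, ∑ a, p s a s' * occ p p0 π t s a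

lemma occ_eq_gOcc {S A : Type*} [Fintype S] [Fintype A]
    (p : S → A → S → ℝ) (p0 : S → ℝ) (π : S → A → ℝ) (t : ℕ) (s : S) (a : A) :
    occ p p0 π t s a = π s a * gOcc p p0 π t s := by
  cases t with
  | zero => simp [occ, gOcc, mul_comm]
  | succ t => simp [occ, gOcc]

lemma occ_nonneg {S A : Type*} [Fintype S] [Fintype A]
    (p : S → A → S → ℝ) (hp_nonneg : ∀ s a s', 0 ≤ p s a s')
    (p0 : S → ℝ) (hp0_nonneg : ∀ s, 0 ≤ p0 s)
    (π : S → A → ℝ) (hπ_nonneg : ∀ s a, 0 ≤ π s a) :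
    ∀ t s a, 0 ≤ occ p p0 π t s a := by
  intro t
  induction t with
  | zero => intro s a; exact mul_nonneg (hp0_nonneg s) (hπ_nonneg s a)
  | succ t ih =>
    intro s a
    refine mul_nonneg (hπ_nonneg s a) ?_
    refine Finset.sum_nonneg fun s' _ => Finset.sum_nonneg fun a' _ => ?_
    exact mul_nonneg (hp_nonneg s' a' s) (ih s' a')

lemma occ_total {S A : Type*} [Fintype S] [Fintype A]
    (p : S → A → S → ℝ) (hp_sum : ∀ s a, ∑ s', p s a s' = 1)
    (p0 : S → ℝ) (hp0_sum : ∑ s, p0 s = 1)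
    (π : S → A → ℝ) (hπ_sum : ∀ s, ∑ a, π s a = 1) :
    ∀ t, ∑ s, ∑ a, occ p p0 π t s a = 1 := by
  intro t
  induction t with
  | zero =>
    simp only [occ, ← Finset.mul_sum, hπ_sum, mul_one]
    exact hp0_sum
  | succ t ih =>
    calc ∑ s', ∑ a', occ p p0 π (t+1) s' a'
        = ∑ s', (∑ a', π s' a') * (∑ s, ∑ a, p s a s' * occ p p0 π t s a) := by
          simp [occ, Finset.sum_mul]
      _ = ∑ s', ∑ s, ∑ a, p s a s' * occ p p0 π t s a := by simp [hπ_sum]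
      _ = ∑ s, ∑ a, (∑ s', p s a s') * occ p p0 π t s a := by
          rw [Finset.sum_comm]
          refine Finset.sum_congr rfl fun s _ => ?_
          rw [Finset.sum_comm]
          simp [Finset.sum_mul]
      _ = 1 := by simp [hp_sum, ih]

lemma gOcc_eq_sum {S A : Type*} [Fintype S] [Fintype A]
    (p : S → A → S → ℝ) (p0 : S → ℝ) (π : S → A → ℝ) (hπ_sum : ∀ s, ∑ a, π s a = 1)
    (t : ℕ) (s : S) : gOcc p p0 π t s = ∑ a, occ p p0 π t s a := by
  simp [occ_eq_gOcc, ← Finset.sum_mul, hπ_sum]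

theorem prop1_uniqueness {S A : Type*} [Fintype S] [Fintype A] [Nonempty S] [Nonempty A]
    (p : S → A → S → ℝ) (hp_nonneg : ∀ s a s', 0 ≤ p s a s')
    (hp_sum : ∀ s a, ∑ s', p s a s' = 1)
    (p0 : S → ℝ) (hp0_pos : ∀ s, 0 < p0 s) (hp0_sum : ∑ s, p0 s = 1)
    (γ : ℝ) (hγ0 : 0 ≤ γ) (hγ1 : γ < 1)
    (π π' : S → A → ℝ)
    (hπ_nonneg : ∀ s a, 0 ≤ π s a) (hπ_sum : ∀ s, ∑ a, π s a = 1)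
    (hπ'_nonneg : ∀ s a, 0 ≤ π' s a) (hπ'_sum : ∀ s, ∑ a, π' s a = 1)
    (h : ∀ s a, dOcc γ p p0 π s a = dOcc γ p p0 π' s a) :
    ∀ s a, π s a = π' s a := by
  have hp0_nonneg : ∀ s, 0 ≤ p0 s := fun s => (hp0_pos s).le
  -- generic facts for any policy
  have key : ∀ (ρ : S → A → ℝ), (∀ s a, 0 ≤ ρ s a) → (∀ s, ∑ a, ρ s a = 1) →
      ∀ s, (∀ a, dOcc γ p p0 ρ s a
              = ρ s a * ((1 - γ) * ∑' t : ℕ, γ ^ t * gOcc p p0 ρ t s))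
        ∧ 0 < (1 - γ) * ∑' t : ℕ, γ ^ t * gOcc p p0 ρ t s := by
    intro ρ hρn hρs s
    have hg_nonneg : ∀ t s, 0 ≤ gOcc p p0 ρ t s := by
      intro t s
      rw [gOcc_eq_sum p p0 ρ hρs]
      exact Finset.sum_nonneg fun a _ => occ_nonneg p hp_nonneg p0 hp0_nonneg ρ hρn t s a
    have hg_le : ∀ t s, gOcc p p0 ρ t s ≤ 1 := by
      intro t s
      rw [gOcc_eq_sum p p0 ρ hρs]
      calc ∑ a, occ p p0 ρ t s a
          ≤ ∑ s', ∑ a, occ p p0 ρ t s' a := by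
            refine Finset.single_le_sum (f := fun s' => ∑ a, occ p p0 ρ t s' a)
              (fun s' _ => Finset.sum_nonneg fun a _ =>
                occ_nonneg p hp_nonneg p0 hp0_nonneg ρ hρn t s' a) (Finset.mem_univ s)
        _ = 1 := occ_total p hp_sum p0 hp0_sum ρ hρs t
    have hsum : Summable (fun t : ℕ => γ ^ t * gOcc p p0 ρ t s) := by
      refine Summable.of_nonneg_of_le
        (fun t => mul_nonneg (pow_nonneg hγ0 t) (hg_nonneg t s))
        (fun t => ?_) (summable_geometric_of_lt_one hγ0 hγ1)
      calc γ ^ t * gOcc p p0 ρ t s ≤ γ ^ t * 1 :=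
            mul_le_mul_of_nonneg_left (hg_le t s) (pow_nonneg hγ0 t)
        _ = γ ^ t := mul_one _
    constructor
    · intro a
      unfold dOcc
      have : ∀ t : ℕ, γ ^ t * occ p p0 ρ t s a = ρ s a * (γ ^ t * gOcc p p0 ρ t s) := by
        intro t; rw [occ_eq_gOcc]; ring
      rw [tsum_congr this, tsum_mul_left]
      ring
    · refine mul_pos (by linarith) ?_
      refine Summable.tsum_pos hsum (fun t => mul_nonneg (pow_nonneg hγ0 t) (hg_nonneg t s)) 0 ?_
      simpa [gOcc] using hp0_pos s
  intro s a
  obtain ⟨hd, hD⟩ := key π hπ_nonneg hπ_sum s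
  obtain ⟨hd', hD'⟩ := key π' hπ'_nonneg hπ'_sum s
  set D := (1 - γ) * ∑' t : ℕ, γ ^ t * gOcc p p0 π t s with hDdef
  set D' := (1 - γ) * ∑' t : ℕ, γ ^ t * gOcc p p0 π' t s with hD'def
  have hDD' : D = D' := by
    have hsumeq : ∑ a, dOcc γ p p0 π s a = ∑ a, dOcc γ p p0 π' s a :=
      Finset.sum_congr rfl fun a _ => h s a
    rw [Finset.sum_congr rfl fun a _ => hd a, Finset.sum_congr rfl fun a _ => hd' a,
      ← Finset.sum_mul, ← Finset.sum_mul, hπ_sum, hπ'_sum, one_mul, one_mul] at hsumeq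
    exact hsumeq
  have := h s a
  rw [hd a, hd' a, ← hDD'] at this
  exact mul_right_cancel₀ (ne_of_gt hD) this
end

section
/- Donsker–Varadhan lower bound (finite case): let P and Q be probability mass functions on a finite nonempty set α with Q(i) > 0 for all i. Then for every function x : α → ℝ, Σ_i P(i)·x(i) − log( Σ_i Q(i)·e^{x(i)} ) ≤ D_KL(P ‖ Q). -/
open Finset

/-- KL divergence between two finitely supported distributions, with the
convention that terms with `p i = 0` contribute `0`. -/
noncomputable def klDiv {α : Type*} [Fintype α] (p q : α → ℝ) : ℝ :=
  ∑ i, if 0 < p i then p i * Real.log (p i / q i) else 0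

theorem donsker_varadhan_lower_bound {α : Type*} [Fintype α] [Nonempty α]
    (P Q : α → ℝ)
    (hP_nonneg : ∀ i, 0 ≤ P i) (hP_sum : ∑ i, P i = 1)
    (hQ_pos : ∀ i, 0 < Q i) (hQ_sum : ∑ i, Q i = 1)
    (x : α → ℝ) :
    ∑ i, P i * x i - Real.log (∑ i, Q i * Real.exp (x i)) ≤ klDiv P Q := by
  set Z : ℝ := ∑ i, Q i * Real.exp (x i) with hZ
  have hZ_pos : 0 < Z := Finset.sum_pos (fun i _ => mul_pos (hQ_pos i) (Real.exp_pos _))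
    Finset.univ_nonempty
  have hP0 : ∀ i, ¬ 0 < P i → P i = 0 := fun i h => le_antisymm (not_lt.mp h) (hP_nonneg i)
  set G : α → ℝ := fun i => Q i * Real.exp (x i) / Z with hG
  have hG_pos : ∀ i, 0 < G i := fun i => div_pos (mul_pos (hQ_pos i) (Real.exp_pos _)) hZ_pos
  have hG_sum : ∑ i, G i = 1 := by
    rw [hG, ← Finset.sum_div, ← hZ, div_self hZ_pos.ne']
  -- Gibbs inequality: 0 ≤ klDiv P G
  have hGibbs : 0 ≤ klDiv P G := by
    have key : ∀ i ∈ Finset.univ, P i - G i ≤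
        (if 0 < P i then P i * Real.log (P i / G i) else 0) := by
      intro i _
      by_cases h : 0 < P i
      · simp only [if_pos h]
        have hlog : Real.log (G i / P i) ≤ G i / P i - 1 :=
          Real.log_le_sub_one_of_pos (div_pos (hG_pos i) h)
        have : 1 - G i / P i ≤ Real.log (P i / G i) := by
          rw [Real.log_div h.ne' (hG_pos i).ne']
          rw [Real.log_div (hG_pos i).ne' h.ne'] at hlog
          linarith
        calc P i - G i = P i * (1 - G i / P i) := by field_simp
          _ ≤ P i * Real.log (P i / G i) := by
              exact mul_le_mul_of_nonneg_left this h.le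
      · simp only [hP0 i h, lt_self_iff_false, if_false]
        linarith [(hG_pos i).le]
    have := Finset.sum_le_sum key
    rwa [Finset.sum_sub_distrib, hP_sum, hG_sum, sub_self] at this
  -- rewrite klDiv P G
  have hEq : klDiv P G = klDiv P Q - ∑ i, P i * x i + Real.log Z := by
    have h1 : ∀ i, (if 0 < P i then P i * Real.log (P i / G i) else 0) =
        (if 0 < P i then P i * Real.log (P i / Q i) else 0) - P i * x i +
          P i * Real.log Z := by
      intro i
      by_cases h : 0 < P i
      · simp only [if_pos h]
        have hQe : Q i * Real.exp (x i) ≠ 0 := (mul_pos (hQ_pos i) (Real.exp_pos _)).ne'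
        rw [hG]
        rw [div_div_eq_mul_div, Real.log_div (mul_pos h hZ_pos).ne' hQe,
          Real.log_mul h.ne' hZ_pos.ne', Real.log_mul (hQ_pos i).ne' (Real.exp_pos _).ne',
          Real.log_exp, Real.log_div h.ne' (hQ_pos i).ne']
        ring
      · simp [if_neg h, hP0 i h]
    unfold klDiv
    rw [Finset.sum_congr rfl (fun i _ => h1 i)]
    rw [Finset.sum_add_distrib, Finset.sum_sub_distrib, ← Finset.sum_mul, hP_sum, one_mul]
  linarith [hGibbs, hEq]
end

section
/- Donsker–Varadhan representation (finite case): let P and Q be probability mass functions on a finite nonempty set α with Q(i) > 0 for all i. Then the supremum over all functions x : α → ℝ of the quantity Σ_i P(i)·x(i) − log( Σ_i Q(i)·e^{x(i)} ) equals D_KL(P ‖ Q); i.e. ⨆_{x : α → ℝ} ( E_P[x] − log E_Q[e^x] ) = D_KL(P ‖ Q). -/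
/-!
Upper bound: writing `y = x - log (P / Q)`, Jensen's inequality for `exp` gives
`exp (∑ P y) ≤ ∑ P exp y ≤ ∑ Q exp x`, and `∑ P y = ∑ P x - D(P ‖ Q)`.
Lower bound: the supremum is approached, but in general not attained, by
`x = log (P / Q)` on the support of `P` and `x = -t` off it, as `t → ∞`.
-/

open Finset

open Real Filter Topology

namespace DonskerVaradhan

variable {α : Type*} {P Q : α → ℝ}

noncomputable def objective [Fintype α] (P Q x : α → ℝ) : ℝ :=
  ∑ i, P i * x i - log (∑ i, Q i * exp (x i))

lemma sum_mul_sub_log_div [Fintype α] (hP : ∀ i, 0 ≤ P i) (x : α → ℝ) :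
    ∑ i, P i * (x i - log (P i / Q i)) = ∑ i, P i * x i - klDiv P Q := by
  rw [klDiv, ← sum_sub_distrib]
  refine sum_congr rfl fun i _ => ?_
  split_ifs with hPi
  · ring
  · simp [le_antisymm (not_lt.mp hPi) (hP i)]

lemma mul_exp_sub_log_div_le {p q : ℝ} (hp : 0 ≤ p) (hq : 0 < q) (x : ℝ) :
    p * exp (x - log (p / q)) ≤ q * exp x := by
  rcases hp.lt_or_eq with hp | rfl
  · rw [exp_sub, exp_log (div_pos hp hq)]
    exact (by field_simp : p * (exp x / (p / q)) = q * exp x).le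
  · rw [zero_mul]
    positivity

theorem objective_le_klDiv [Fintype α] (hP : ∀ i, 0 ≤ P i) (hP_sum : ∑ i, P i = 1)
    (hQ : ∀ i, 0 < Q i) (x : α → ℝ) : objective P Q x ≤ klDiv P Q := by
  set y : α → ℝ := fun i => x i - log (P i / Q i)
  have jensen : exp (∑ i, P i * y i) ≤ ∑ i, P i * exp (y i) := by
    simpa only [smul_eq_mul] using
      convexOn_exp.map_sum_le (fun i _ => hP i) hP_sum (fun i _ => Set.mem_univ (y i))
  have h_exp : exp (∑ i, P i * y i) ≤ ∑ i, Q i * exp (x i) :=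
    jensen.trans (sum_le_sum fun i _ => mul_exp_sub_log_div_le (hP i) (hQ i) (x i))
  have h_log : ∑ i, P i * y i ≤ log (∑ i, Q i * exp (x i)) :=
    (le_log_iff_exp_le ((exp_pos _).trans_le h_exp)).2 h_exp
  rw [sum_mul_sub_log_div hP] at h_log
  rw [objective]
  linarith

noncomputable def witness (P Q : α → ℝ) (t : ℝ) (i : α) : ℝ :=
  if 0 < P i then log (P i / Q i) else -t

lemma sum_mul_witness [Fintype α] (hP : ∀ i, 0 ≤ P i) (t : ℝ) :
    ∑ i, P i * witness P Q t i = klDiv P Q := by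
  refine sum_congr rfl fun i _ => ?_
  rw [witness]
  split_ifs with hPi
  · rfl
  · simp [le_antisymm (not_lt.mp hPi) (hP i)]

lemma mul_exp_witness {i : α} (hQ : 0 < Q i) (t : ℝ) :
    Q i * exp (witness P Q t i) = if 0 < P i then P i else Q i * exp (-t) := by
  rw [witness]
  split_ifs with hPi
  · rw [exp_log (div_pos hPi hQ)]
    field_simp
  · rfl

theorem klDiv_sub_le_objective_witness [Fintype α] (hP : ∀ i, 0 ≤ P i) (hP_sum : ∑ i, P i = 1)
    (hQ : ∀ i, 0 < Q i) (t : ℝ) :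
    klDiv P Q - (∑ i, Q i) * exp (-t) ≤ objective P Q (witness P Q t) := by
  set Z := ∑ i, Q i * exp (witness P Q t i)
  have h_lower : 1 ≤ Z := by
    rw [← hP_sum]
    refine sum_le_sum fun i _ => ?_
    rw [mul_exp_witness (hQ i)]
    split_ifs with hPi
    · rfl
    · rw [le_antisymm (not_lt.mp hPi) (hP i)]
      exact (mul_pos (hQ i) (exp_pos _)).le
  have h_upper : Z ≤ 1 + (∑ i, Q i) * exp (-t) := by
    rw [← hP_sum, sum_mul, ← sum_add_distrib]
    refine sum_le_sum fun i _ => ?_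
    rw [mul_exp_witness (hQ i)]
    split_ifs
    · exact le_add_of_nonneg_right (mul_pos (hQ i) (exp_pos _)).le
    · exact le_add_of_nonneg_left (hP i)
  have h_log : log Z ≤ (∑ i, Q i) * exp (-t) := by
    linarith [log_le_sub_one_of_pos (zero_lt_one.trans_le h_lower)]
  rw [objective, sum_mul_witness hP]
  linarith

end DonskerVaradhan

open DonskerVaradhan in
theorem donsker_varadhan_representation_general {α : Type*} [Fintype α]
    (P Q : α → ℝ)
    (hP_nonneg : ∀ i, 0 ≤ P i) (hP_sum : ∑ i, P i = 1)
    (hQ_pos : ∀ i, 0 < Q i) :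
    (⨆ x : α → ℝ, (∑ i, P i * x i - Real.log (∑ i, Q i * Real.exp (x i)))) =
      klDiv P Q := by
  change (⨆ x, objective P Q x) = klDiv P Q
  have h_le := objective_le_klDiv hP_nonneg hP_sum hQ_pos
  have h_bdd : BddAbove (Set.range (objective P Q)) := ⟨klDiv P Q, Set.forall_mem_range.2 h_le⟩
  refine le_antisymm (ciSup_le h_le) ?_
  have h_lim : Tendsto (fun t => klDiv P Q - (∑ i, Q i) * exp (-t)) atTop (𝓝 (klDiv P Q)) := by
    simpa using tendsto_const_nhds.sub (tendsto_exp_neg_atTop_nhds_zero.const_mul (∑ i, Q i))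
  exact le_of_tendsto' h_lim fun t =>
    (klDiv_sub_le_objective_witness hP_nonneg hP_sum hQ_pos t).trans (le_ciSup h_bdd _)

theorem donsker_varadhan_representation {α : Type*} [Fintype α] [Nonempty α]
    (P Q : α → ℝ)
    (hP_nonneg : ∀ i, 0 ≤ P i) (hP_sum : ∑ i, P i = 1)
    (hQ_pos : ∀ i, 0 < Q i) (hQ_sum : ∑ i, Q i = 1) :
    (⨆ x : α → ℝ, (∑ i, P i * x i - Real.log (∑ i, Q i * Real.exp (x i)))) =
      klDiv P Q :=
  donsker_varadhan_representation_general P Q hP_nonneg hP_sum hQ_pos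
end
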